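/- Let s₁ ≥ s₂ ≥ s₃ > 0 be the singular values of an invertible 3×3 real matrix g, and suppose (gₙ) is a sequence of matrices in SL(3,ℝ) with ‖gₙ‖ → ∞ such that s₁(gₙ)/s₂(gₙ) converges to a finite limit c. Then any limit point L of gₙ/‖gₙ‖ has rank 2. -/

import Mathlib

open Matrix Filter

set_option synthInstance.maxHeartbeats 400000

/-- The operator norm of a `3×3` real matrix. -/
noncomputable def opN (g : Matrix (Fin 3) (Fin 3) ℝ) : ℝ :=
  ‖Matrix.toEuclideanCLM (𝕜 := ℝ) (n := Fin 3) g‖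

namespace RankLimitAux

lemma toCLM_mem_unitary {a : Matrix (Fin 3) (Fin 3) ℝ}
    (ha : a ∈ Matrix.orthogonalGroup (Fin 3) ℝ) :
    Matrix.toEuclideanCLM (𝕜 := ℝ) (n := Fin 3) a ∈
      unitary (EuclideanSpace ℝ (Fin 3) →L[ℝ] EuclideanSpace ℝ (Fin 3)) := by
  rw [Unitary.mem_iff] at ha ⊢
  refine ⟨?_, ?_⟩
  · rw [← map_star, ← _root_.map_mul, ha.1, _root_.map_one]
  · rw [← map_star, ← _root_.map_mul, ha.2, _root_.map_one]

lemma opN_unitary_mul {a : Matrix (Fin 3) (Fin 3) ℝ} (M : Matrix (Fin 3) (Fin 3) ℝ)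
    (ha : a ∈ Matrix.orthogonalGroup (Fin 3) ℝ) : opN (a * M) = opN M := by
  unfold opN
  rw [_root_.map_mul]
  exact CStarRing.norm_mem_unitary_mul _ (toCLM_mem_unitary ha)

lemma opN_mul_unitary {b : Matrix (Fin 3) (Fin 3) ℝ} (M : Matrix (Fin 3) (Fin 3) ℝ)
    (hb : b ∈ Matrix.orthogonalGroup (Fin 3) ℝ) : opN (M * b) = opN M := by
  unfold opN
  rw [_root_.map_mul]
  exact CStarRing.norm_mul_mem_unitary _ (toCLM_mem_unitary hb)

lemma opN_smul (t : ℝ) (M : Matrix (Fin 3) (Fin 3) ℝ) : opN (t • M) = |t| * opN M := by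
  unfold opN
  have h : Matrix.toEuclideanCLM (𝕜 := ℝ) (n := Fin 3) (t • M)
      = t • Matrix.toEuclideanCLM (𝕜 := ℝ) (n := Fin 3) M := map_smul _ t M
  rw [h, norm_smul t (Matrix.toEuclideanCLM (𝕜 := ℝ) (n := Fin 3) M), Real.norm_eq_abs]

lemma opN_diagonal (d : Fin 3 → ℝ) (k : Fin 3) (hnn : ∀ i, 0 ≤ d i)
    (hk : ∀ i, d i ≤ d k) : opN (Matrix.diagonal d) = d k := by
  set T := Matrix.toEuclideanCLM (𝕜 := ℝ) (n := Fin 3) (Matrix.diagonal d) with hTdef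
  have hT : ∀ (x : EuclideanSpace ℝ (Fin 3)) (i : Fin 3), T x i = d i * x i := by
    intro x i
    have h1 := Matrix.ofLp_toEuclideanCLM (𝕜 := ℝ) (Matrix.diagonal d) x
    have := congrFun h1 i
    exact this.trans (Matrix.mulVec_diagonal _ _ _)
  have hub : opN (Matrix.diagonal d) ≤ d k := by
    refine ContinuousLinearMap.opNorm_le_bound _ (hnn k) ?_
    intro x
    rw [EuclideanSpace.norm_eq, EuclideanSpace.norm_eq,
      ← Real.sqrt_sq (hnn k), ← Real.sqrt_mul (sq_nonneg _)]
    apply Real.sqrt_le_sqrt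
    rw [Finset.mul_sum]
    apply Finset.sum_le_sum
    intro i _
    rw [hT x i]
    have h2 : ‖d i * x i‖ ^ 2 = d i ^ 2 * ‖x i‖ ^ 2 := by
      rw [norm_mul, mul_pow, Real.norm_eq_abs, sq_abs]
    rw [h2]
    exact mul_le_mul_of_nonneg_right (pow_le_pow_left₀ (hnn i) (hk i) 2) (sq_nonneg _)
  have hlb : d k ≤ opN (Matrix.diagonal d) := by
    have key : ∀ i : Fin 3, ‖T (EuclideanSpace.single k (1:ℝ)) i‖ ^ 2
        = if i = k then d k ^ 2 else 0 := by
      intro i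
      rw [hT, EuclideanSpace.single_apply]
      by_cases h : i = k
      · subst h; simp
      · simp [h]
    have hnorm1 : ‖T (EuclideanSpace.single k (1:ℝ))‖ = d k := by
      rw [EuclideanSpace.norm_eq, Finset.sum_congr rfl fun i _ => key i,
        Finset.sum_ite_eq' Finset.univ k fun _ => d k ^ 2]
      simp [Real.sqrt_sq (hnn k)]
    calc d k = ‖T (EuclideanSpace.single k (1:ℝ))‖ := hnorm1.symm
    _ ≤ ‖T‖ * ‖EuclideanSpace.single k (1:ℝ)‖ := T.le_opNorm _
    _ = opN (Matrix.diagonal d) := by rw [EuclideanSpace.norm_single]; simp [opN, hTdef]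
  exact le_antisymm hub hlb

lemma opN_svd {a b : Matrix (Fin 3) (Fin 3) ℝ}
    (ha : a ∈ Matrix.orthogonalGroup (Fin 3) ℝ) (hb : b ∈ Matrix.orthogonalGroup (Fin 3) ℝ)
    (d : Fin 3 → ℝ) (k : Fin 3) (hnn : ∀ i, 0 ≤ d i) (hk : ∀ i, d i ≤ d k) :
    opN (a * Matrix.diagonal d * b) = d k := by
  rw [opN_mul_unitary _ hb, opN_unitary_mul _ ha, opN_diagonal d k hnn hk]

lemma adjugate_mem_orth {a : Matrix (Fin 3) (Fin 3) ℝ}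
    (ha : a ∈ Matrix.orthogonalGroup (Fin 3) ℝ) :
    a.adjugate ∈ Matrix.orthogonalGroup (Fin 3) ℝ := by
  rw [Unitary.mem_iff] at ha ⊢
  have hdet2 : a.det * a.det = 1 := by
    have h := congrArg Matrix.det ha.1
    rwa [Matrix.det_mul, Matrix.star_eq_conjTranspose, Matrix.det_conjTranspose,
      star_trivial, Matrix.det_one] at h
  have h2 : a.adjugate = a.det • star a := by
    calc a.adjugate = (star a * a) * a.adjugate := by rw [ha.1, one_mul]
    _ = star a * (a * a.adjugate) := by rw [mul_assoc]
    _ = star a * (a.det • 1) := by rw [Matrix.mul_adjugate]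
    _ = a.det • star a := by rw [mul_smul_comm, mul_one]
  constructor
  · rw [h2, star_smul, star_star, star_trivial a.det, smul_mul_smul_comm, ha.2, hdet2, one_smul]
  · rw [h2, star_smul, star_star, star_trivial a.det, smul_mul_smul_comm, ha.1, hdet2, one_smul]

lemma rank_submatrix_le' {l : Type*} [Fintype l] (A : Matrix (Fin 3) (Fin 3) ℝ)
    (f g : l → Fin 3) : (A.submatrix f g).rank ≤ A.rank := by
  have h1 : ((1 : Matrix (Fin 3) (Fin 3) ℝ).submatrix f (Equiv.refl (Fin 3))) * A
      = A.submatrix f id := by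
    rw [Matrix.one_submatrix_mul]
    simp
  have h2 : (A.submatrix f id) * ((1 : Matrix (Fin 3) (Fin 3) ℝ).submatrix (Equiv.refl (Fin 3)) g)
      = A.submatrix f g := by
    rw [Matrix.mul_submatrix_one]
    simp
  calc (A.submatrix f g).rank
      = (((1 : Matrix (Fin 3) (Fin 3) ℝ).submatrix f (Equiv.refl (Fin 3))) * A
          * ((1 : Matrix (Fin 3) (Fin 3) ℝ).submatrix (Equiv.refl (Fin 3)) g)).rank := by
        rw [h1, h2]
    _ ≤ (((1 : Matrix (Fin 3) (Fin 3) ℝ).submatrix f (Equiv.refl (Fin 3))) * A).rank :=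
        Matrix.rank_mul_le_left _ _
    _ ≤ A.rank := Matrix.rank_mul_le_right _ _

lemma cluster_eq {X : Type*} [TopologicalSpace X] [T2Space X] {v : ℕ → X} {y l : X}
    (h : MapClusterPt y atTop v) (hv : Tendsto v atTop (nhds l)) : y = l :=
  eq_of_nhds_neBot (h.clusterPt.mono hv)

lemma opN_continuous : Continuous opN := by
  let φ : Matrix (Fin 3) (Fin 3) ℝ →ₗ[ℝ]
      (EuclideanSpace ℝ (Fin 3) →L[ℝ] EuclideanSpace ℝ (Fin 3)) :=
    { toFun := fun M => Matrix.toEuclideanCLM (𝕜 := ℝ) (n := Fin 3) M,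
      map_add' := fun x y => map_add _ x y,
      map_smul' := fun t x => map_smul _ t x }
  exact continuous_norm.comp φ.continuous_of_finiteDimensional

end RankLimitAux

open RankLimitAux

set_option maxHeartbeats 1000000 in
/-- If `gₙ ∈ SL(3,ℝ)` have singular values `s n 0 ≥ s n 1 ≥ s n 2 > 0`
(witnessed by singular value decompositions), `‖gₙ‖ → ∞`, and the ratio
`s₁(gₙ)/s₂(gₙ)` converges to a finite limit `c`, then every limit point `L` of the
normalized sequence `gₙ/‖gₙ‖` has rank `2`. -/
theorem rank_limit_point_eq_two
    (g : ℕ → Matrix.SpecialLinearGroup (Fin 3) ℝ) (s : ℕ → Fin 3 → ℝ)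
    (hsvd : ∀ n, ∃ a b : Matrix (Fin 3) (Fin 3) ℝ,
      a ∈ Matrix.orthogonalGroup (Fin 3) ℝ ∧ b ∈ Matrix.orthogonalGroup (Fin 3) ℝ ∧
      (g n : Matrix (Fin 3) (Fin 3) ℝ) = a * Matrix.diagonal (s n) * b)
    (hord : ∀ n, s n 1 ≤ s n 0 ∧ s n 2 ≤ s n 1 ∧ 0 < s n 2)
    (hnorm : Tendsto (fun n => opN (g n : Matrix (Fin 3) (Fin 3) ℝ)) atTop atTop)
    (c : ℝ)
    (hc : Tendsto (fun n => s n 0 / s n 1) atTop (nhds c))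
    (L : Matrix (Fin 3) (Fin 3) ℝ)
    (hL : MapClusterPt L atTop
      (fun n => (opN (g n : Matrix (Fin 3) (Fin 3) ℝ))⁻¹ • (g n : Matrix (Fin 3) (Fin 3) ℝ))) :
    L.rank = 2 := by
  have hs2 : ∀ n, 0 < s n 2 := fun n => (hord n).2.2
  have hs1 : ∀ n, 0 < s n 1 := fun n => lt_of_lt_of_le (hs2 n) (hord n).2.1
  have hs0 : ∀ n, 0 < s n 0 := fun n => lt_of_lt_of_le (hs1 n) (hord n).1
  -- the operator norm of `g n` is `s n 0`
  have hN : ∀ n, opN (g n : Matrix (Fin 3) (Fin 3) ℝ) = s n 0 := by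
    intro n
    obtain ⟨a, b, ha, hb, hab⟩ := hsvd n
    rw [hab]
    refine opN_svd ha hb _ 0 ?_ ?_
    · intro i
      fin_cases i
      · exact (hs0 n).le
      · exact (hs1 n).le
      · exact (hs2 n).le
    · intro i
      fin_cases i
      · exact le_rfl
      · exact (hord n).1
      · exact le_trans (hord n).2.1 (hord n).1
  -- the operator norm of the adjugate of `g n` is `s n 0 * s n 1`
  have hAdjN : ∀ n, opN (Matrix.adjugate (g n : Matrix (Fin 3) (Fin 3) ℝ))
      = s n 0 * s n 1 := by
    intro n
    obtain ⟨a, b, ha, hb, hab⟩ := hsvd n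
    have e0 : (∏ j ∈ Finset.univ.erase (0 : Fin 3), s n j) = s n 1 * s n 2 := by
      rw [show (Finset.univ.erase (0 : Fin 3)) = {1, 2} by decide,
        Finset.prod_insert (by decide), Finset.prod_singleton]
    have e1 : (∏ j ∈ Finset.univ.erase (1 : Fin 3), s n j) = s n 0 * s n 2 := by
      rw [show (Finset.univ.erase (1 : Fin 3)) = {0, 2} by decide,
        Finset.prod_insert (by decide), Finset.prod_singleton]
    have e2 : (∏ j ∈ Finset.univ.erase (2 : Fin 3), s n j) = s n 0 * s n 1 := by
      rw [show (Finset.univ.erase (2 : Fin 3)) = {0, 1} by decide,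
        Finset.prod_insert (by decide), Finset.prod_singleton]
    rw [hab, Matrix.adjugate_mul_distrib, Matrix.adjugate_mul_distrib,
      Matrix.adjugate_diagonal, ← mul_assoc]
    rw [opN_svd (adjugate_mem_orth hb) (adjugate_mem_orth ha) _ 2 ?_ ?_]
    · exact e2
    · intro i
      refine Finset.prod_nonneg fun j _ => ?_
      fin_cases j
      · exact (hs0 n).le
      · exact (hs1 n).le
      · exact (hs2 n).le
    · intro i
      have h0 := hs0 n; have h1 := hs1 n; have h2 := hs2 n
      have o1 := (hord n).1; have o2 := (hord n).2.1
      fin_cases i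
      · show (∏ j ∈ Finset.univ.erase (0:Fin 3), s n j)
            ≤ ∏ j ∈ Finset.univ.erase (2:Fin 3), s n j
        rw [e0, e2]; nlinarith
      · show (∏ j ∈ Finset.univ.erase (1:Fin 3), s n j)
            ≤ ∏ j ∈ Finset.univ.erase (2:Fin 3), s n j
        rw [e1, e2]; nlinarith
      · exact le_rfl
  -- `s n 0 → ∞`
  have hs0top : Tendsto (fun n => s n 0) atTop atTop := hnorm.congr fun n => hN n
  -- `det L = 0`
  have hdet_t : Tendsto
      (fun n => Matrix.det ((opN (g n : Matrix (Fin 3) (Fin 3) ℝ))⁻¹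
        • (g n : Matrix (Fin 3) (Fin 3) ℝ))) atTop (nhds 0) := by
    have heq : ∀ n, Matrix.det ((opN (g n : Matrix (Fin 3) (Fin 3) ℝ))⁻¹
        • (g n : Matrix (Fin 3) (Fin 3) ℝ)) = ((s n 0)⁻¹) ^ 3 := by
      intro n
      rw [Matrix.det_smul, hN n, Matrix.SpecialLinearGroup.det_coe, mul_one, Fintype.card_fin]
    have h0 : Tendsto (fun n => (s n 0)⁻¹) atTop (nhds 0) := hs0top.inv_tendsto_atTop
    have := (h0.pow 3)
    rw [zero_pow (by norm_num)] at this
    exact this.congr fun n => (heq n).symm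
  have hdetL : L.det = 0 := by
    have hcl : MapClusterPt L.det atTop
        (fun n => Matrix.det ((opN (g n : Matrix (Fin 3) (Fin 3) ℝ))⁻¹
          • (g n : Matrix (Fin 3) (Fin 3) ℝ))) :=
      (MapClusterPt.continuousAt_comp ((Continuous.matrix_det continuous_id).continuousAt) hL)
    exact cluster_eq hcl hdet_t
  -- `c ≥ 1`
  have hc1 : (1 : ℝ) ≤ c :=
    ge_of_tendsto' hc fun n => (one_le_div (hs1 n)).mpr (hord n).1
  have hcpos : (0 : ℝ) < c := lt_of_lt_of_le one_pos hc1
  -- `‖adj L‖ = c⁻¹ ≠ 0`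
  have hadj_t : Tendsto
      (fun n => opN (Matrix.adjugate ((opN (g n : Matrix (Fin 3) (Fin 3) ℝ))⁻¹
        • (g n : Matrix (Fin 3) (Fin 3) ℝ)))) atTop (nhds c⁻¹) := by
    have key : ∀ n, opN (Matrix.adjugate ((opN (g n : Matrix (Fin 3) (Fin 3) ℝ))⁻¹
        • (g n : Matrix (Fin 3) (Fin 3) ℝ))) = s n 1 / s n 0 := by
      intro n
      rw [hN n, Matrix.adjugate_smul, opN_smul, hAdjN n, Fintype.card_fin]
      have h0 := hs0 n; have h1 := hs1 n
      rw [abs_of_nonneg (by positivity)]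
      field_simp
      rw [show (3:ℕ) - 1 = 2 from rfl, ← mul_pow, mul_one_div_cancel h0.ne', one_pow]
    have hratio : Tendsto (fun n => s n 1 / s n 0) atTop (nhds c⁻¹) := by
      have h := hc.inv₀ (ne_of_gt hcpos)
      exact h.congr fun n => by rw [inv_div]
    exact hratio.congr fun n => (key n).symm
  have hAdjL : opN (Matrix.adjugate L) = c⁻¹ := by
    have hcont : ContinuousAt (fun M : Matrix (Fin 3) (Fin 3) ℝ => opN (Matrix.adjugate M)) L :=
      (opN_continuous.comp (Continuous.matrix_adjugate continuous_id)).continuousAt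
    have hcl : MapClusterPt (opN (Matrix.adjugate L)) atTop
        (fun n => opN (Matrix.adjugate ((opN (g n : Matrix (Fin 3) (Fin 3) ℝ))⁻¹
          • (g n : Matrix (Fin 3) (Fin 3) ℝ)))) :=
      MapClusterPt.continuousAt_comp
        (f := fun M : Matrix (Fin 3) (Fin 3) ℝ => opN (Matrix.adjugate M)) hcont hL
    exact cluster_eq hcl hadj_t
  have hadjL_ne : Matrix.adjugate L ≠ 0 := by
    intro h
    rw [h] at hAdjL
    have : opN (0 : Matrix (Fin 3) (Fin 3) ℝ) = 0 := by
      unfold opN; rw [map_zero, norm_zero]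
    rw [this] at hAdjL
    have : (0 : ℝ) < c⁻¹ := inv_pos.mpr hcpos
    linarith [hAdjL]
  -- pick a nonzero entry of the adjugate
  obtain ⟨i, j, hij⟩ : ∃ i j, Matrix.adjugate L i j ≠ 0 := by
    by_contra h
    push_neg at h
    exact hadjL_ne (by ext i j; simpa using h i j)
  have hminor : (L.submatrix j.succAbove i.succAbove).det ≠ 0 := by
    intro h0
    rw [Matrix.adjugate_fin_succ_eq_det_submatrix, h0, mul_zero] at hij
    exact hij rfl
  -- lower bound: rank L ≥ 2
  have hlow : 2 ≤ L.rank := by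
    have hunit : IsUnit (L.submatrix j.succAbove i.succAbove) :=
      (Matrix.isUnit_iff_isUnit_det _).mpr (isUnit_iff_ne_zero.mpr hminor)
    have h2 : (L.submatrix j.succAbove i.succAbove).rank = 2 := by
      rw [Matrix.rank_of_isUnit _ hunit, Fintype.card_fin]
    calc 2 = (L.submatrix j.succAbove i.succAbove).rank := h2.symm
    _ ≤ L.rank := rank_submatrix_le' L _ _
  -- upper bound: rank L ≤ 2
  have hup : L.rank ≤ 2 := by
    have hmul : L * Matrix.adjugate L = 0 := by
      rw [Matrix.mul_adjugate, hdetL, zero_smul]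
    have hsum : L.rank + (Matrix.adjugate L).rank ≤ 3 := by
      simpa using Matrix.rank_add_rank_le_card_of_mul_eq_zero hmul
    have hone : 1 ≤ (Matrix.adjugate L).rank := by
      have hunit : IsUnit ((Matrix.adjugate L).submatrix (fun _ : Fin 1 => i)
          (fun _ : Fin 1 => j)) := by
        refine (Matrix.isUnit_iff_isUnit_det _).mpr (isUnit_iff_ne_zero.mpr ?_)
        rw [Matrix.det_fin_one]
        exact hij
      have h1 : ((Matrix.adjugate L).submatrix (fun _ : Fin 1 => i)
          (fun _ : Fin 1 => j)).rank = 1 := by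
        rw [Matrix.rank_of_isUnit _ hunit, Fintype.card_fin]
      calc 1 = ((Matrix.adjugate L).submatrix (fun _ : Fin 1 => i)
          (fun _ : Fin 1 => j)).rank := h1.symm
      _ ≤ (Matrix.adjugate L).rank := rank_submatrix_le' _ _ _
    omega
  omega
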